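/- Sub-linear convergence rate of the loss-weighted gradient flow (Proposition 1, weak form): assume each ℓ_i is nonnegative and there is θ* ∈ E with ℓ_i(θ*) = 0 for every i (so L̂_n(θ*) = 0). Let θ : [0,∞) → E be continuously differentiable with ∑_{j=1}^n ℓ_j(θ(u)) > 0 for all u ≥ 0 and θ′(u) = −∑_{i=1}^n p_i(u)·∇ℓ_i(θ(u)) where p_i(u) = ℓ_i(θ(u)) / ∑_{j=1}^n ℓ_j(θ(u)). Then for every S > 0, (1/S)·∫₀^S L̂_n(θ(u)) du ≤ ‖θ(0) − θ*‖² / (2·S). -/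

import Mathlib

open scoped RealInnerProductSpace
open Set Finset MeasureTheory

/-!
By convexity and `ℓ_i(θ*) = 0`, each loss satisfies `ℓ_i(θ) ≤ ⟪∇ℓ_i(θ), θ - θ*⟫`. Averaging these
with the loss weights `p_i` and using Cauchy–Schwarz (`∑ p_i ℓ_i = ∑ ℓ_i² / ∑ ℓ_j ≥ (1/n) ∑ ℓ_i`)
gives `L̂_n(θ(u)) ≤ -⟪θ'(u), θ(u) - θ*⟫ = -(d/du) ½‖θ(u) - θ*‖²`. Integrating over `[0, S]`
bounds `∫₀^S L̂_n(θ)` by `½‖θ(0) - θ*‖²`.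
-/

theorem ConvexOn.hasFDerivAt_apply_sub_le {E : Type*} [NormedAddCommGroup E] [NormedSpace ℝ E]
    {s : Set E} {f : E → ℝ} {f' : E →L[ℝ] ℝ} {x y : E} (hf : ConvexOn ℝ s f) (hx : x ∈ s)
    (hy : y ∈ s) (hf' : HasFDerivAt f f' x) : f' (y - x) ≤ f y - f x := by
  set L : ℝ →ᵃ[ℝ] E := AffineMap.lineMap x y
  have hφ : ConvexOn ℝ (L ⁻¹' s) (f ∘ L) := hf.comp_affineMap L
  have hL0 : L 0 = x := AffineMap.lineMap_apply_zero x y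
  have hL1 : L 1 = y := AffineMap.lineMap_apply_one x y
  have hφ' : HasDerivAt (f ∘ L) (f' (y - x)) 0 :=
    hf'.comp_hasDerivAt_of_eq 0 AffineMap.hasDerivAt_lineMap hL0.symm
  simpa [slope_def_field, hL0, hL1] using
    hφ.le_slope_of_hasDerivAt (x := 0) (y := 1) (by simpa [hL0]) (by simpa [hL1]) one_pos hφ'

theorem ConvexOn.inner_gradient_sub_le {E : Type*} [NormedAddCommGroup E] [InnerProductSpace ℝ E]
    [CompleteSpace E] {s : Set E} {f : E → ℝ} {f' x y : E} (hf : ConvexOn ℝ s f) (hx : x ∈ s)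
    (hy : y ∈ s) (hf' : HasGradientAt f f' x) : ⟪f', y - x⟫ ≤ f y - f x := by
  simpa using hf.hasFDerivAt_apply_sub_le hx hy (hasGradientAt_iff_hasFDerivAt.mp hf')

theorem Finset.sum_div_card_le_sum_div_sum_mul {ι : Type*} (s : Finset ι) {a b : ι → ℝ}
    (ha : ∀ i ∈ s, 0 ≤ a i) (hab : ∀ i ∈ s, a i ≤ b i) :
    (∑ i ∈ s, a i) / #s ≤ ∑ i ∈ s, a i / (∑ j ∈ s, a j) * b i := by
  rcases (sum_nonneg ha).eq_or_lt with hT | hT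
  · simp [← hT]
  set T := ∑ j ∈ s, a j
  have hs : (0 : ℝ) < #s := by
    exact_mod_cast card_pos.mpr (nonempty_of_sum_ne_zero hT.ne')
  calc T / #s ≤ (∑ i ∈ s, a i ^ 2) / T := by
        rw [div_le_div_iff₀ hs hT, ← sq]
        simpa [mul_comm] using sq_sum_le_card_mul_sum_sq (s := s) (f := a)
    _ = ∑ i ∈ s, a i / T * a i := by
        rw [sum_div]
        exact sum_congr rfl fun i _ => by ring
    _ ≤ ∑ i ∈ s, a i / T * b i :=
        sum_le_sum fun i hi => mul_le_mul_of_nonneg_left (hab i hi) (div_nonneg (ha i hi) hT.le)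

section

variable {E : Type*} [NormedAddCommGroup E] [InnerProductSpace ℝ E]

theorem sum_div_card_le_inner_loss_weighted_gradient [CompleteSpace E] {ι : Type*} [Fintype ι]
    {ℓ : ι → E → ℝ} {g : ι → E} {x θs : E} (hconv : ∀ i, ConvexOn ℝ univ (ℓ i))
    (hgrad : ∀ i, HasGradientAt (ℓ i) (g i) x) (hnn : ∀ i, 0 ≤ ℓ i x) (hzero : ∀ i, ℓ i θs = 0) :
    (∑ i, ℓ i x) / Fintype.card ι ≤ ⟪∑ i, (ℓ i x / ∑ j, ℓ j x) • g i, x - θs⟫ := by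
  have hℓ_le_inner : ∀ i, ℓ i x ≤ ⟪g i, x - θs⟫ := fun i => by
    have h := (hconv i).inner_gradient_sub_le (mem_univ x) (mem_univ θs) (hgrad i)
    rw [hzero i, ← neg_sub, inner_neg_right] at h
    linarith
  simpa [sum_inner, real_inner_smul_left] using
    univ.sum_div_card_le_sum_div_sum_mul (fun i _ => hnn i) (fun i _ => hℓ_le_inner i)

theorem integral_le_sq_norm_sub_sub_sq_norm_sub_of_le_neg_inner {θ θ' : ℝ → E} {φ : ℝ → ℝ}
    {z : E} {a b : ℝ} (hab : a ≤ b) (hθ : ∀ u ∈ Icc a b, HasDerivAt θ (θ' u) u)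
    (hφ : IntegrableOn φ (Icc a b)) (hφ_le : ∀ u ∈ Ioo a b, φ u ≤ -⟪θ' u, θ u - z⟫) :
    ∫ u in a..b, φ u ≤ (‖θ a - z‖ ^ 2 - ‖θ b - z‖ ^ 2) / 2 := by
  have hdist : ∀ u ∈ Icc a b,
      HasDerivAt (fun v => -(‖θ v - z‖ ^ 2 / 2)) (-⟪θ' u, θ u - z⟫) u := fun u hu => by
    refine (((hθ u hu).sub_const z).norm_sq.div_const 2).neg.congr_deriv ?_
    rw [real_inner_comm]; ring
  have h := intervalIntegral.integral_le_sub_of_hasDeriv_right_of_le hab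
    (fun u hu => (hdist u hu).continuousAt.continuousWithinAt)
    (fun u hu => (hdist u (Ioo_subset_Icc_self hu)).hasDerivWithinAt) hφ hφ_le
  linarith

end

theorem loss_weighted_gradient_flow_sublinear_rate_general
    {E : Type*} [NormedAddCommGroup E] [InnerProductSpace ℝ E] [CompleteSpace E]
    (n : ℕ) (ℓ : Fin n → E → ℝ) (g : Fin n → E → E)
    (hconv : ∀ i, ConvexOn ℝ Set.univ (ℓ i))
    (hgrad : ∀ i x, HasGradientAt (ℓ i) (g i x) x)
    (hnn : ∀ i x, 0 ≤ ℓ i x)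
    (θs : E) (hzero : ∀ i, ℓ i θs = 0)
    (θ : ℝ → E)
    (hθ : ∀ u : ℝ, 0 ≤ u →
      HasDerivAt θ (-(∑ i, (ℓ i (θ u) / ∑ j, ℓ j (θ u)) • g i (θ u))) u) :
    ∀ S : ℝ, 0 < S →
      (1 / S) * ∫ u in (0:ℝ)..S, (1 / (n : ℝ)) * ∑ i, ℓ i (θ u) ≤
        ‖θ 0 - θs‖ ^ 2 / (2 * S) := by
  intro S hS
  have hθ_cont : ContinuousOn θ (Icc 0 S) := fun u hu =>
    (hθ u hu.1).continuousAt.continuousWithinAt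
  have hℓ_cont : ∀ i, Continuous (ℓ i) := fun i =>
    continuous_iff_continuousAt.mpr fun x => (hgrad i x).continuousAt
  have hloss_cont : ContinuousOn (fun u => (1 / (n : ℝ)) * ∑ i, ℓ i (θ u)) (Icc 0 S) :=
    continuousOn_const.mul <| continuousOn_finsetSum _ fun i _ =>
      (hℓ_cont i).comp_continuousOn hθ_cont
  have hloss_le : ∀ u ∈ Ioo 0 S, (1 / (n : ℝ)) * ∑ i, ℓ i (θ u) ≤
      -⟪-(∑ i, (ℓ i (θ u) / ∑ j, ℓ j (θ u)) • g i (θ u)), θ u - θs⟫ := fun u _ => by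
    simpa [inner_neg_left, div_eq_inv_mul] using
      sum_div_card_le_inner_loss_weighted_gradient hconv (fun i => hgrad i (θ u))
        (fun i => hnn i (θ u)) hzero
  have hintegral := integral_le_sq_norm_sub_sub_sq_norm_sub_of_le_neg_inner hS.le
    (fun u hu => hθ u hu.1) (hloss_cont.integrableOn_Icc) hloss_le
  calc (1 / S) * ∫ u in (0:ℝ)..S, (1 / (n : ℝ)) * ∑ i, ℓ i (θ u)
      ≤ (1 / S) * (‖θ 0 - θs‖ ^ 2 / 2) := by
        gcongr
        linarith [sq_nonneg ‖θ S - θs‖]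
    _ = ‖θ 0 - θs‖ ^ 2 / (2 * S) := by ring

/-- Sub-linear convergence rate of the loss-weighted gradient flow
(Proposition 1, weak form). -/
theorem loss_weighted_gradient_flow_sublinear_rate
    {E : Type*} [NormedAddCommGroup E] [InnerProductSpace ℝ E] [CompleteSpace E]
    (n : ℕ) (hn : 1 ≤ n) (ℓ : Fin n → E → ℝ) (g : Fin n → E → E)
    (hconv : ∀ i, ConvexOn ℝ Set.univ (ℓ i))
    (hgrad : ∀ i x, HasGradientAt (ℓ i) (g i x) x)
    (hnn : ∀ i x, 0 ≤ ℓ i x)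
    (θs : E) (hzero : ∀ i, ℓ i θs = 0)
    (θ : ℝ → E)
    (hpos : ∀ u : ℝ, 0 ≤ u → 0 < ∑ j, ℓ j (θ u))
    (hθ : ∀ u : ℝ, 0 ≤ u →
      HasDerivAt θ (-(∑ i, (ℓ i (θ u) / ∑ j, ℓ j (θ u)) • g i (θ u))) u)
    (hC1 : ContinuousOn
      (fun u => -(∑ i, (ℓ i (θ u) / ∑ j, ℓ j (θ u)) • g i (θ u))) (Set.Ici 0)) :
    ∀ S : ℝ, 0 < S →
      (1 / S) * ∫ u in (0:ℝ)..S, (1 / (n : ℝ)) * ∑ i, ℓ i (θ u) ≤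
        ‖θ 0 - θs‖ ^ 2 / (2 * S) :=
  loss_weighted_gradient_flow_sublinear_rate_general n ℓ g hconv hgrad hnn θs hzero θ hθ
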